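/- Let R be a commutative ring and M a free R-module of rank at most 3. Then any two derivations D, D' of the exterior algebra Λ(M) which each raise exterior degree by 2 commute: D ∘ D' = D' ∘ D. -/

import Mathlib

/-!
The commutator of two derivations is again a derivation, and a derivation of `Λ(M)` is
determined by its values on `M`, which generates `Λ(M)`. The commutator of two derivations
raising exterior degree by 2 sends `M` into `Λ⁵(M)`, which vanishes when `M` is free of rank
at most 3.
-/

open ExteriorAlgebra

section Leibniz

variable {R A : Type*} [CommRing R] [Ring A] [Algebra R A]

/-- Mathlib's `Derivation` requires a commutative algebra, unlike `ExteriorAlgebra R M`. -/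
def IsLeibniz (D : Module.End R A) : Prop :=
  ∀ x y, D (x * y) = D x * y + x * D y

theorem IsLeibniz.map_one {D : Module.End R A} (hD : IsLeibniz D) : D 1 = 0 := by
  simpa using hD 1 1

theorem IsLeibniz.map_algebraMap {D : Module.End R A} (hD : IsLeibniz D) (r : R) :
    D (algebraMap R A r) = 0 := by
  rw [Algebra.algebraMap_eq_smul_one, map_smul, hD.map_one, smul_zero]

theorem IsLeibniz.commutator {D D' : Module.End R A} (hD : IsLeibniz D) (hD' : IsLeibniz D') :
    IsLeibniz (D * D' - D' * D) := by
  intro x y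
  simp only [LinearMap.sub_apply, Module.End.mul_apply, hD _ _, hD' _ _, map_add]
  noncomm_ring

end Leibniz

namespace ExteriorAlgebra

variable {R M : Type*} [CommRing R] [AddCommGroup M] [Module R M]

theorem _root_.IsLeibniz.eq_zero_of_map_ι {D : Module.End R (ExteriorAlgebra R M)}
    (hD : IsLeibniz D) (hι : ∀ m, D (ι R m) = 0) : D = 0 := by
  refine LinearMap.ext fun x => ?_
  rw [LinearMap.zero_apply]
  induction x using ExteriorAlgebra.induction with
  | algebraMap r => exact hD.map_algebraMap r
  | ι m => exact hι m
  | mul x y hx hy => rw [hD x y, hx, hy, zero_mul, mul_zero, add_zero]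
  | add x y hx hy => rw [map_add, hx, hy, add_zero]

theorem pow_range_ι_eq_bot_of_card_lt {I : Type*} [Fintype I] (b : Module.Basis I R M) {r : ℕ}
    (hr : Fintype.card I < r) : LinearMap.range (ι R (M := M)) ^ r = ⊥ := by
  have hιMulti : ιMulti R r (M := M) = 0 :=
    b.ext_alternating fun v hv => absurd (Fintype.card_le_of_injective v hv) (by simpa)
  refine (ιMulti_span_fixedDegree R r).symm.trans ?_
  rw [hιMulti, Submodule.span_eq_bot]
  rintro _ ⟨v, rfl⟩
  rfl

end ExteriorAlgebra

/-- Over the exterior algebra of a free module of rank at most 3, any two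
derivations raising exterior degree by 2 commute. -/
theorem stmt5 {R M : Type*} [CommRing R] [AddCommGroup M] [Module R M]
    {n : ℕ} (hn : n ≤ 3) (b : Module.Basis (Fin n) R M)
    (D D' : ExteriorAlgebra R M →ₗ[R] ExteriorAlgebra R M)
    (hD : ∀ x y, D (x * y) = D x * y + x * D y)
    (hD' : ∀ x y, D' (x * y) = D' x * y + x * D' y)
    (hDdeg : ∀ r : ℕ,
      ∀ x ∈ (LinearMap.range (ExteriorAlgebra.ι R (M := M))) ^ r,
        D x ∈ (LinearMap.range (ExteriorAlgebra.ι R (M := M))) ^ (r + 2))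
    (hD'deg : ∀ r : ℕ,
      ∀ x ∈ (LinearMap.range (ExteriorAlgebra.ι R (M := M))) ^ r,
        D' x ∈ (LinearMap.range (ExteriorAlgebra.ι R (M := M))) ^ (r + 2)) :
    ∀ x, D (D' x) = D' (D x) := by
  have hΛ5 : LinearMap.range (ι R (M := M)) ^ (1 + 2 + 2) = ⊥ :=
    pow_range_ι_eq_bot_of_card_lt b (by simp; omega)
  have hι : ∀ m, ι R m ∈ LinearMap.range (ι R (M := M)) ^ 1 := fun m => by
    simp
  have hcomm : D * D' - D' * D = 0 := by
    refine (IsLeibniz.commutator hD hD').eq_zero_of_map_ι fun m => ?_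
    have h₁ := hΛ5 ▸ hDdeg _ _ (hD'deg 1 _ (hι m))
    have h₂ := hΛ5 ▸ hD'deg _ _ (hDdeg 1 _ (hι m))
    rw [Submodule.mem_bot] at h₁ h₂
    simp only [LinearMap.sub_apply, Module.End.mul_apply, h₁, h₂, sub_self]
  exact fun x => sub_eq_zero.mp (LinearMap.congr_fun hcomm x)
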